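/- Let d ≥ 4 and let 𝔸_{d,2} be the space of skew-symmetric real d×d matrices with all row sums zero. Then: (i) the only matrix in 𝔸_{d,2} fixed by P_σ (·) P_σᵀ for all σ ∈ S_{d−1}×S_1 (permutations fixing index d) is the zero matrix; (ii) a matrix A ∈ 𝔸_{d,2} is fixed by P_σ (·) P_σᵀ for all σ ∈ S_{d−2}×S_1×S_1 (permutations fixing indices d−1 and d) if and only if there exists α ∈ ℝ with A_{i,d−1} = −α/(d−2) and A_{i,d} = α/(d−2) for all i ≤ d−2, A_{d−1,d} = −α, A skew-symmetric, and all other entries zero; in particular 𝔸_{d,2} ∩ M(d,d)^{S_{d−2}×S_1×S_1} is one-dimensional. -/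

import Mathlib

open Matrix

/-- The permutation matrix of `σ`. -/
def permMat {d : ℕ} (σ : Equiv.Perm (Fin d)) : Matrix (Fin d) (Fin d) ℝ :=
  Matrix.of fun i j => if σ j = i then (1 : ℝ) else 0

/-- The fixed-point space of a set `G` of permutations for the diagonal action
`W ↦ P_σ W P_σᵀ` on `d × d` matrices. -/
def fixedSpace {d : ℕ} (G : Set (Equiv.Perm (Fin d))) :
    Submodule ℝ (Matrix (Fin d) (Fin d) ℝ) where
  carrier := {W | ∀ σ ∈ G, permMat σ * W * (permMat σ)ᵀ = W}
  zero_mem' := by intro σ _; simp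
  add_mem' := by
    intro a b ha hb σ hσ
    rw [Matrix.mul_add, Matrix.add_mul, ha σ hσ, hb σ hσ]
  smul_mem' := by
    intro c a ha σ hσ
    rw [Matrix.mul_smul, Matrix.smul_mul, ha σ hσ]

/-- `𝔸_{d,2}`: skew-symmetric matrices with all row sums zero. -/
def Ad2 (d : ℕ) : Submodule ℝ (Matrix (Fin d) (Fin d) ℝ) where
  carrier := {A | Aᵀ = -A ∧ ∀ i, ∑ j, A i j = 0}
  zero_mem' := ⟨by simp, by simp⟩
  add_mem' := by
    rintro a b ⟨ha1, ha2⟩ ⟨hb1, hb2⟩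
    refine ⟨by rw [Matrix.transpose_add, ha1, hb1, neg_add], fun i => ?_⟩
    simp [Matrix.add_apply, Finset.sum_add_distrib, ha2 i, hb2 i]
  smul_mem' := by
    rintro c a ⟨ha1, ha2⟩
    refine ⟨by rw [Matrix.transpose_smul, ha1, smul_neg], fun i => ?_⟩
    simp [Matrix.smul_apply, ← Finset.mul_sum, ha2 i]

/-! Conjugation by `P_σ` acts entrywise, `A i j ↦ A (σ⁻¹ i) (σ⁻¹ j)`. A skew-symmetric matrix
fixed by the transposition of `i` and `j` has `A i j = A j i = -A i j`, so all entries between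
moved indices vanish, and transpositions of moved indices make the columns at the fixed indices
constant off the fixed set. Zero row sums then force `A = 0` when one index is fixed. When two
indices `p, q` are fixed they leave one free parameter: subtracting the matching multiple of an
explicit generator leaves a fixed matrix that vanishes at one entry `(i₀, q)`, hence everywhere. -/

section Index

variable {ι : Type*} {p q : ι}

lemma apply_swap_of_transpose_eq_neg {A : Matrix ι ι ℝ} (hA : Aᵀ = -A)
    (i j : ι) : A j i = -A i j := by
  simpa using congrFun (congrFun hA i) j

lemma apply_self_of_transpose_eq_neg {A : Matrix ι ι ℝ} (hA : Aᵀ = -A)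
    (i : ι) : A i i = 0 := by
  linarith [apply_swap_of_transpose_eq_neg hA i i]

lemma eq_zero_of_transpose_eq_neg_of_row_eq_zero {A : Matrix ι ι ℝ} (hA : Aᵀ = -A)
    (hrow : ∀ i, i ≠ p → i ≠ q → ∀ j, A i j = 0) (hpq : A p q = 0) : A = 0 := by
  ext i j
  rw [Matrix.zero_apply]
  by_cases hi : i ≠ p ∧ i ≠ q
  · exact hrow i hi.1 hi.2 j
  by_cases hj : j ≠ p ∧ j ≠ q
  · rw [apply_swap_of_transpose_eq_neg hA j i, hrow j hj.1 hj.2 i, neg_zero]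
  rw [not_and_or, not_not, not_not] at hi hj
  rcases hi with rfl | rfl <;> rcases hj with rfl | rfl
  · exact apply_self_of_transpose_eq_neg hA _
  · exact hpq
  · rw [apply_swap_of_transpose_eq_neg hA, hpq, neg_zero]
  · exact apply_self_of_transpose_eq_neg hA _

variable [Fintype ι] [DecidableEq ι]

lemma sum_eq_add_add_sum_compl_pair {M : Type*} [AddCommMonoid M] (hpq : p ≠ q) (f : ι → M) :
    ∑ j, f j = f p + f q + ∑ j ∈ {p, q}ᶜ, f j := by
  rw [← Finset.sum_add_sum_compl {p, q}, Finset.sum_pair hpq]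

lemma card_compl_pair (hpq : p ≠ q) :
    ((({p, q}ᶜ : Finset ι)).card : ℝ) = Fintype.card ι - 2 := by
  have h := Finset.card_compl_add_card ({p, q} : Finset ι)
  rw [Finset.card_pair hpq] at h
  have h' : ((({p, q}ᶜ : Finset ι)).card : ℝ) + 2 = Fintype.card ι := by exact_mod_cast h
  linarith

end Index

section

variable {d : ℕ}

lemma permMat_mul_mul_transpose_apply (σ : Equiv.Perm (Fin d))
    (A : Matrix (Fin d) (Fin d) ℝ) (i j : Fin d) :
    (permMat σ * A * (permMat σ)ᵀ) i j = A (σ⁻¹ i) (σ⁻¹ j) := by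
  have hσ : ∀ x y : Fin d, (σ y = x) = (y = σ⁻¹ x) := fun x y =>
    propext Equiv.Perm.eq_inv_iff_eq.symm
  simp [Matrix.mul_apply, permMat, hσ, ite_mul, Finset.sum_ite_eq']

lemma permMat_mul_mul_transpose_eq_iff {σ : Equiv.Perm (Fin d)}
    {A : Matrix (Fin d) (Fin d) ℝ} :
    permMat σ * A * (permMat σ)ᵀ = A ↔ ∀ i j, A (σ i) (σ j) = A i j := by
  simp_rw [← Matrix.ext_iff, permMat_mul_mul_transpose_apply]
  constructor
  · intro h i j
    simpa using (h (σ i) (σ j)).symm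
  · intro h i j
    simpa using (h (σ⁻¹ i) (σ⁻¹ j)).symm

lemma apply_eq_zero_of_swap_fixed {A : Matrix (Fin d) (Fin d) ℝ} (hA : Aᵀ = -A) {i j : Fin d}
    (h : permMat (Equiv.swap i j) * A * (permMat (Equiv.swap i j))ᵀ = A) : A i j = 0 := by
  have hji := permMat_mul_mul_transpose_eq_iff.1 h i j
  rw [Equiv.swap_apply_left, Equiv.swap_apply_right] at hji
  linarith [apply_swap_of_transpose_eq_neg hA i j]

lemma apply_eq_of_swap_fixed {A : Matrix (Fin d) (Fin d) ℝ} {i i' k : Fin d}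
    (hi : k ≠ i) (hi' : k ≠ i')
    (h : permMat (Equiv.swap i i') * A * (permMat (Equiv.swap i i'))ᵀ = A) : A i' k = A i k := by
  simpa [Equiv.swap_apply_of_ne_of_ne hi hi'] using permMat_mul_mul_transpose_eq_iff.1 h i k

lemma eq_zero_of_mem_Ad2_of_fixed {q : Fin d} {A : Matrix (Fin d) (Fin d) ℝ} (hA : A ∈ Ad2 d)
    (h : ∀ σ : Equiv.Perm (Fin d), σ q = q → permMat σ * A * (permMat σ)ᵀ = A) : A = 0 := by
  obtain ⟨hskew, hrow⟩ := hA
  have hoff : ∀ i j, i ≠ q → j ≠ q → A i j = 0 := fun i j hi hj =>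
    apply_eq_zero_of_swap_fixed hskew (h _ (Equiv.swap_apply_of_ne_of_ne hi.symm hj.symm))
  have hrow_zero : ∀ i, i ≠ q → ∀ j, A i j = 0 := by
    intro i hi j
    rcases eq_or_ne j q with rfl | hj
    · have hsum := hrow i
      rwa [Fintype.sum_eq_add_sum_compl j,
        Finset.sum_eq_zero fun k hk => hoff i k hi (by simpa using hk), add_zero] at hsum
    · exact hoff i j hi hj
  exact eq_zero_of_transpose_eq_neg_of_row_eq_zero hskew (fun i hi _ => hrow_zero i hi)
    (apply_self_of_transpose_eq_neg hskew q)

lemma natCast_sub_two_pos (hd : 3 ≤ d) : 0 < (d : ℝ) - 2 := by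
  have : (3 : ℝ) ≤ d := by exact_mod_cast hd
  linarith

noncomputable def pairFixedMatrix (p q : Fin d) (α : ℝ) : Matrix (Fin d) (Fin d) ℝ :=
  Matrix.of fun i j : Fin d =>
    if i = p then
      (if j = q then -α else if j = p then 0 else α / ((d : ℝ) - 2))
    else if i = q then
      (if j = p then α else if j = q then 0 else -α / ((d : ℝ) - 2))
    else if j = p then -α / ((d : ℝ) - 2)
    else if j = q then α / ((d : ℝ) - 2)
    else 0

section pairFixedMatrix

variable {p q : Fin d}

lemma pairFixedMatrix_eq_smul (p q : Fin d) (α : ℝ) :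
    pairFixedMatrix p q α = α • pairFixedMatrix p q 1 := by
  ext i j
  simp only [pairFixedMatrix, of_apply, Matrix.smul_apply, smul_eq_mul]
  split_ifs <;> ring

lemma pairFixedMatrix_apply_of_ne {i : Fin d} (hpq : p ≠ q) (hip : i ≠ p) (hiq : i ≠ q)
    (α : ℝ) : pairFixedMatrix p q α i q = α / ((d : ℝ) - 2) := by
  simp [pairFixedMatrix, hip, hiq, hpq.symm]

lemma pairFixedMatrix_ne_zero : pairFixedMatrix p q 1 ≠ 0 := by
  intro h
  simpa [pairFixedMatrix] using congrFun (congrFun h p) q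

lemma pairFixedMatrix_mem_Ad2 (hd : 3 ≤ d) (hpq : p ≠ q) (α : ℝ) :
    pairFixedMatrix p q α ∈ Ad2 d := by
  refine ⟨?_, fun i => ?_⟩
  · ext i j
    simp only [pairFixedMatrix, transpose_apply, Matrix.neg_apply, of_apply]
    split_ifs <;> subst_vars <;> first | exact (hpq rfl).elim | ring
  · have hd2 := (natCast_sub_two_pos hd).ne'
    have hcompl : ∀ j ∈ ({p, q}ᶜ : Finset (Fin d)), pairFixedMatrix p q α i j =
        if i = p then α / ((d : ℝ) - 2) else if i = q then -α / ((d : ℝ) - 2) else 0 := by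
      intro j hj
      simp only [Finset.mem_compl, Finset.mem_insert, Finset.mem_singleton, not_or] at hj
      simp [pairFixedMatrix, hj.1, hj.2]
    rw [sum_eq_add_add_sum_compl_pair hpq, Finset.sum_congr rfl hcompl, Finset.sum_const,
      nsmul_eq_mul, card_compl_pair hpq, Fintype.card_fin]
    by_cases hip : i = p
    · simp [pairFixedMatrix, hip, hpq]; field_simp; ring
    by_cases hiq : i = q
    · simp [pairFixedMatrix, hiq, hpq.symm]; field_simp; ring
    · simp [pairFixedMatrix, hip, hiq, hpq.symm]; ring

lemma pairFixedMatrix_mem_fixedSpace (p q : Fin d) (α : ℝ) :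
    pairFixedMatrix p q α ∈ fixedSpace {σ | σ p = p ∧ σ q = q} := by
  rintro σ ⟨hσp, hσq⟩
  refine permMat_mul_mul_transpose_eq_iff.2 fun i j => ?_
  simp only [pairFixedMatrix, of_apply, σ.injective.eq_iff' hσp, σ.injective.eq_iff' hσq]

lemma eq_zero_of_mem_Ad2_inf_fixedSpace {i₀ : Fin d} (hpq : p ≠ q) (hi₀p : i₀ ≠ p)
    (hi₀q : i₀ ≠ q) {A : Matrix (Fin d) (Fin d) ℝ}
    (hA : A ∈ Ad2 d ⊓ fixedSpace {σ | σ p = p ∧ σ q = q}) (h₀ : A i₀ q = 0) : A = 0 := by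
  obtain ⟨⟨hskew, hrow⟩, hfix⟩ := hA
  have hswap : ∀ i j, i ≠ p → i ≠ q → j ≠ p → j ≠ q →
      permMat (Equiv.swap i j) * A * (permMat (Equiv.swap i j))ᵀ = A :=
    fun i j hip hiq hjp hjq => hfix _
      ⟨Equiv.swap_apply_of_ne_of_ne hip.symm hjp.symm,
        Equiv.swap_apply_of_ne_of_ne hiq.symm hjq.symm⟩
  have hoff : ∀ i j, i ≠ p → i ≠ q → j ≠ p → j ≠ q → A i j = 0 :=
    fun i j hip hiq hjp hjq => apply_eq_zero_of_swap_fixed hskew (hswap i j hip hiq hjp hjq)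
  have hcol : ∀ i, i ≠ p → i ≠ q → A i q = 0 := fun i hip hiq => by
    rw [apply_eq_of_swap_fixed hi₀q.symm hiq.symm (hswap i₀ i hi₀p hi₀q hip hiq), h₀]
  have hrow_zero : ∀ i, i ≠ p → i ≠ q → ∀ j, A i j = 0 := by
    intro i hip hiq j
    have hsum := hrow i
    rw [sum_eq_add_add_sum_compl_pair hpq, hcol i hip hiq,
      Finset.sum_eq_zero fun k hk => hoff i k hip hiq (by simp_all) (by simp_all),
      add_zero, add_zero] at hsum
    by_cases hjp : j = p
    · rwa [hjp]
    by_cases hjq : j = q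
    · rw [hjq, hcol i hip hiq]
    · exact hoff i j hip hiq hjp hjq
  have hpq_zero : A p q = 0 := by
    have hsum := hrow p
    rwa [sum_eq_add_add_sum_compl_pair hpq, apply_self_of_transpose_eq_neg hskew,
      Finset.sum_eq_zero fun k hk => by
        rw [apply_swap_of_transpose_eq_neg hskew k p, hrow_zero k (by simp_all) (by simp_all),
          neg_zero],
      zero_add, add_zero] at hsum
  exact eq_zero_of_transpose_eq_neg_of_row_eq_zero hskew hrow_zero hpq_zero

theorem Ad2_inf_fixedSpace_eq_span (hd : 3 ≤ d) (hpq : p ≠ q) :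
    Ad2 d ⊓ fixedSpace {σ | σ p = p ∧ σ q = q} = ℝ ∙ pairFixedMatrix p q 1 := by
  have hgen : pairFixedMatrix p q 1 ∈ Ad2 d ⊓ fixedSpace {σ | σ p = p ∧ σ q = q} :=
    ⟨pairFixedMatrix_mem_Ad2 hd hpq 1, pairFixedMatrix_mem_fixedSpace p q 1⟩
  refine le_antisymm (fun A hA => ?_) ((Submodule.span_singleton_le_iff_mem _ _).2 hgen)
  obtain ⟨i₀, hi₀⟩ : ({p, q}ᶜ : Finset (Fin d)).Nonempty := by
    rw [← Finset.card_pos, ← Nat.cast_pos (α := ℝ), card_compl_pair hpq, Fintype.card_fin]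
    exact natCast_sub_two_pos hd
  simp only [Finset.mem_compl, Finset.mem_insert, Finset.mem_singleton, not_or] at hi₀
  have hd2 := (natCast_sub_two_pos hd).ne'
  set α := ((d : ℝ) - 2) * A i₀ q
  have hsub : A - α • pairFixedMatrix p q 1 = 0 := by
    refine eq_zero_of_mem_Ad2_inf_fixedSpace hpq hi₀.1 hi₀.2
      (sub_mem hA (Submodule.smul_mem _ α hgen)) ?_
    rw [Matrix.sub_apply, Matrix.smul_apply, pairFixedMatrix_apply_of_ne hpq hi₀.1 hi₀.2,
      smul_eq_mul, mul_one_div, mul_div_cancel_left₀ _ hd2, sub_self]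
  exact Submodule.mem_span_singleton.2 ⟨α, (sub_eq_zero.1 hsub).symm⟩

end pairFixedMatrix

end

/-- for `d ≥ 4`: (i) the only matrix of `𝔸_{d,2}` fixed by all
permutations fixing the last index is zero; (ii) the matrices of `𝔸_{d,2}` fixed by
all permutations fixing the last two indices are exactly the explicit one-parameter
family described, so that `𝔸_{d,2} ∩ M(d,d)^{S_{d−2}×S_1×S_1}` is one-dimensional. -/
theorem Ad2_fixed_vectors (d : ℕ) (hd : 4 ≤ d) :
    (∀ A ∈ Ad2 d,
      (∀ σ : Equiv.Perm (Fin d), σ ⟨d - 1, by omega⟩ = ⟨d - 1, by omega⟩ →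
        permMat σ * A * (permMat σ)ᵀ = A) → A = 0) ∧
    (∀ A ∈ Ad2 d,
      ((∀ σ : Equiv.Perm (Fin d), σ ⟨d - 2, by omega⟩ = ⟨d - 2, by omega⟩ →
          σ ⟨d - 1, by omega⟩ = ⟨d - 1, by omega⟩ →
          permMat σ * A * (permMat σ)ᵀ = A) ↔
        ∃ α : ℝ, A = Matrix.of fun i j : Fin d =>
          if i = ⟨d - 2, by omega⟩ then
            (if j = ⟨d - 1, by omega⟩ then -α else if j = ⟨d - 2, by omega⟩ then 0
             else α / ((d : ℝ) - 2))
          else if i = ⟨d - 1, by omega⟩ then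
            (if j = ⟨d - 2, by omega⟩ then α else if j = ⟨d - 1, by omega⟩ then 0
             else -α / ((d : ℝ) - 2))
          else if j = ⟨d - 2, by omega⟩ then -α / ((d : ℝ) - 2)
          else if j = ⟨d - 1, by omega⟩ then α / ((d : ℝ) - 2)
          else 0)) ∧
    Module.finrank ℝ
      ↥(Ad2 d ⊓ fixedSpace {σ : Equiv.Perm (Fin d) |
          σ ⟨d - 2, by omega⟩ = ⟨d - 2, by omega⟩ ∧
          σ ⟨d - 1, by omega⟩ = ⟨d - 1, by omega⟩}) = 1 := by
  have hpq : (⟨d - 2, by omega⟩ : Fin d) ≠ ⟨d - 1, by omega⟩ := by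
    simp only [ne_eq, Fin.mk.injEq]; omega
  have hspan := Ad2_inf_fixedSpace_eq_span (by omega) hpq
  refine ⟨fun A hA h => eq_zero_of_mem_Ad2_of_fixed hA h, fun A hA => ?_, ?_⟩
  · calc _ ↔ A ∈ Ad2 d ⊓ fixedSpace {σ : Equiv.Perm (Fin d) |
          σ ⟨d - 2, by omega⟩ = ⟨d - 2, by omega⟩ ∧ σ ⟨d - 1, by omega⟩ = ⟨d - 1, by omega⟩} :=
          ⟨fun h => ⟨hA, fun σ hσ => h σ hσ.1 hσ.2⟩, fun h σ hσp hσq => h.2 σ ⟨hσp, hσq⟩⟩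
      _ ↔ ∃ α, A = pairFixedMatrix _ _ α := by
          simp_rw [hspan, Submodule.mem_span_singleton, ← pairFixedMatrix_eq_smul, eq_comm]
  · rw [hspan, finrank_span_singleton pairFixedMatrix_ne_zero]
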